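/- arXiv:1211.0361 — 4 statements merged into one kernel-verified Lean document; each statement's English description precedes it below -/
import Mathlib

section
/- Let A be a real symmetric n×n matrix and D a nonsingular real n×n matrix. Let λ_j and λ̃_j denote the j-th largest eigenvalues of A and Dᵀ A D respectively. Then for all j, |λ̃_j − λ_j| ≤ |λ_j| · ‖DᵀD − I‖₂. -/
/-!
Ostrowski's argument through Courant–Fischer. Since `⟪Dᵀ A D x, x⟫ = ⟪A (D x), D x⟫`, a dimension
count gives `x ≠ 0` in the span of the top `j + 1` eigenvectors of `Dᵀ A D` with `D x` in the span
of the bottom `n - j` eigenvectors of `A`, so `μ' j ‖x‖² ≤ μ j ‖D x‖²`; the same argument with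
`D⁻¹` gives some `x ≠ 0` with `μ j ‖D x‖² ≤ μ' j ‖x‖²`. Both turn into the claim because
`‖D x‖² - ‖x‖² = ⟪(DᵀD - 1) x, x⟫` is at most `‖DᵀD - 1‖ ‖x‖²` in absolute value.
-/

open scoped Matrix Matrix.Norms.L2Operator

/-- `μ` is the decreasing enumeration of the eigenvalues of the real symmetric matrix `A`. -/
def IsDecEigenvalueSeq {n : ℕ} (A : Matrix (Fin n) (Fin n) ℝ) (hA : A.IsHermitian)
    (μ : Fin n → ℝ) : Prop :=
  Antitone μ ∧ ∃ e : Equiv.Perm (Fin n), μ = hA.eigenvalues ∘ e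

open Module Submodule
open scoped InnerProductSpace

namespace OrthonormalBasis

variable {ι E : Type*} [Fintype ι] [NormedAddCommGroup E] [InnerProductSpace ℝ E]
  (v : OrthonormalBasis ι ℝ E) {T : E →ₗ[ℝ] E} {μ : ι → ℝ}

lemma repr_eq_zero_of_mem_span_image {s : Set ι} {x : E} (hx : x ∈ span ℝ (v '' s)) {i : ι}
    (hi : i ∉ s) : v.repr x i = 0 := by
  have := v.toBasis.repr_support_subset_of_mem_span s (by simpa using hx)
  simpa using not_imp_not.mpr (@this i) hi

lemma repr_apply_of_apply_eq_smul (hT : ∀ i, T (v i) = μ i • v i) (x : E) (i : ι) :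
    v.repr (T x) i = μ i * v.repr x i := by
  classical
  conv_lhs => rw [← v.sum_repr x]
  simp [hT, smul_smul, v.repr_self, Pi.single_apply, mul_comm]

lemma inner_map_self_eq_sum (hT : ∀ i, T (v i) = μ i • v i) (x : E) :
    ⟪T x, x⟫_ℝ = ∑ i, μ i * v.repr x i ^ 2 := by
  rw [← v.repr.inner_map_map, PiLp.inner_apply]
  simp [v.repr_apply_of_apply_eq_smul hT, sq, mul_left_comm]

lemma norm_sq_eq_sum_repr_sq (x : E) : ‖x‖ ^ 2 = ∑ i, v.repr x i ^ 2 := by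
  simpa [real_inner_self_eq_norm_sq] using
    v.inner_map_self_eq_sum (T := LinearMap.id) (μ := 1) (by simp) x

lemma inner_map_self_le_of_mem_span_image (hT : ∀ i, T (v i) = μ i • v i) {s : Set ι} {c : ℝ}
    (hc : ∀ i ∈ s, μ i ≤ c) {x : E} (hx : x ∈ span ℝ (v '' s)) : ⟪T x, x⟫_ℝ ≤ c * ‖x‖ ^ 2 := by
  rw [v.inner_map_self_eq_sum hT, v.norm_sq_eq_sum_repr_sq, Finset.mul_sum]
  refine Finset.sum_le_sum fun i _ => ?_
  by_cases hi : i ∈ s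
  · exact mul_le_mul_of_nonneg_right (hc i hi) (sq_nonneg _)
  · simp [v.repr_eq_zero_of_mem_span_image hx hi]

lemma le_inner_map_self_of_mem_span_image (hT : ∀ i, T (v i) = μ i • v i) {s : Set ι} {c : ℝ}
    (hc : ∀ i ∈ s, c ≤ μ i) {x : E} (hx : x ∈ span ℝ (v '' s)) : c * ‖x‖ ^ 2 ≤ ⟪T x, x⟫_ℝ := by
  have := v.inner_map_self_le_of_mem_span_image (T := -T) (μ := -μ) (by simp [hT])
    (fun i hi => neg_le_neg (hc i hi)) hx
  simp only [LinearMap.neg_apply, inner_neg_left] at this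
  linarith

lemma finrank_span_image (s : Finset ι) : finrank ℝ (span ℝ (v '' s)) = s.card := by
  rw [← Subtype.range_coe (s := (s : Set ι)), ← Set.range_comp, finrank_span_eq_card]
  · simp
  · exact v.orthonormal.linearIndependent.comp _ Subtype.val_injective

end OrthonormalBasis

lemma LinearEquiv.exists_ne_zero_mem_and_apply_mem {K V W : Type*} [DivisionRing K]
    [AddCommGroup V] [Module K V] [AddCommGroup W] [Module K W] [FiniteDimensional K V]
    (f : V ≃ₗ[K] W) {S : Submodule K V} {T : Submodule K W}
    (h : finrank K V < finrank K S + finrank K T) : ∃ x ≠ 0, x ∈ S ∧ f x ∈ T := by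
  have hdim : finrank K (T.comap f.toLinearMap) = finrank K T := by
    rw [comap_equiv_eq_map_symm, LinearEquiv.finrank_map_eq]
  have : ¬Disjoint S (T.comap f.toLinearMap) := fun hd =>
    (finrank_add_finrank_le_of_disjoint hd).not_gt (hdim ▸ h)
  simp only [disjoint_def, not_forall] at this
  obtain ⟨x, hxS, hxT, hx0⟩ := this
  exact ⟨x, hx0, hxS, hxT⟩

section Congruence

variable {n : ℕ} {E : Type*} [NormedAddCommGroup E] [InnerProductSpace ℝ E]
  {v w : OrthonormalBasis (Fin n) ℝ E} {T T' : E →ₗ[ℝ] E} {μ μ' : Fin n → ℝ}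

lemma exists_mul_norm_sq_le_mul_norm_sq_apply (hT : ∀ i, T (v i) = μ i • v i)
    (hT' : ∀ i, T' (w i) = μ' i • w i) (hμ : Antitone μ) (hμ' : Antitone μ') (f : E ≃ₗ[ℝ] E)
    (hf : ∀ x, ⟪T' x, x⟫_ℝ = ⟪T (f x), f x⟫_ℝ) (j : Fin n) :
    ∃ x ≠ 0, μ' j * ‖x‖ ^ 2 ≤ μ j * ‖f x‖ ^ 2 := by
  have : FiniteDimensional ℝ E := v.toBasis.finiteDimensional_of_finite
  have hdim : finrank ℝ E < finrank ℝ (span ℝ (w '' ↑(Finset.Iic j)))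
      + finrank ℝ (span ℝ (v '' ↑(Finset.Ici j))) := by
    rw [w.finrank_span_image, v.finrank_span_image, finrank_eq_card_basis v.toBasis]
    simp only [Fintype.card_fin, Fin.card_Iic, Fin.card_Ici]
    omega
  obtain ⟨x, hx0, hxw, hxv⟩ := f.exists_ne_zero_mem_and_apply_mem hdim
  refine ⟨x, hx0, ?_⟩
  calc μ' j * ‖x‖ ^ 2 ≤ ⟪T' x, x⟫_ℝ :=
        w.le_inner_map_self_of_mem_span_image hT' (fun i hi => hμ' (by simpa using hi)) hxw
    _ = ⟪T (f x), f x⟫_ℝ := hf x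
    _ ≤ μ j * ‖f x‖ ^ 2 :=
        v.inner_map_self_le_of_mem_span_image hT (fun i hi => hμ (by simpa using hi)) hxv

lemma exists_mul_norm_sq_apply_le_mul_norm_sq (hT : ∀ i, T (v i) = μ i • v i)
    (hT' : ∀ i, T' (w i) = μ' i • w i) (hμ : Antitone μ) (hμ' : Antitone μ') (f : E ≃ₗ[ℝ] E)
    (hf : ∀ x, ⟪T' x, x⟫_ℝ = ⟪T (f x), f x⟫_ℝ) (j : Fin n) :
    ∃ x ≠ 0, μ j * ‖f x‖ ^ 2 ≤ μ' j * ‖x‖ ^ 2 := by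
  obtain ⟨y, hy0, hy⟩ := exists_mul_norm_sq_le_mul_norm_sq_apply hT' hT hμ' hμ f.symm
    (fun y => by rw [hf, f.apply_symm_apply]) j
  exact ⟨f.symm y, by simpa using hy0, by rwa [f.apply_symm_apply]⟩

end Congruence

namespace Matrix

variable {m : Type*} [Fintype m] [DecidableEq m]

lemma inner_toEuclideanLin_transpose_mul_mul_self (A D : Matrix m m ℝ) (x : EuclideanSpace ℝ m) :
    ⟪toEuclideanLin (Dᵀ * A * D) x, x⟫_ℝ
      = ⟪toEuclideanLin A (toEuclideanLin D x), toEuclideanLin D x⟫_ℝ := by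
  rw [toLpLin_mul_same, toLpLin_mul_same, LinearMap.comp_apply, LinearMap.comp_apply,
    ← conjTranspose_eq_transpose_of_trivial, toEuclideanLin_conjTranspose_eq_adjoint,
    LinearMap.adjoint_inner_left]

lemma abs_norm_sq_toEuclideanLin_sub_norm_sq_le (D : Matrix m m ℝ) (x : EuclideanSpace ℝ m) :
    |‖toEuclideanLin D x‖ ^ 2 - ‖x‖ ^ 2| ≤ ‖Dᵀ * D - 1‖ * ‖x‖ ^ 2 := by
  have h : ‖toEuclideanLin D x‖ ^ 2 - ‖x‖ ^ 2 = ⟪toEuclideanLin (Dᵀ * D - 1) x, x⟫_ℝ := by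
    have := inner_toEuclideanLin_transpose_mul_mul_self 1 D x
    simp only [Matrix.mul_one, toLpLin_one, LinearMap.id_apply, real_inner_self_eq_norm_sq] at this
    rw [← this, map_sub, LinearMap.sub_apply, inner_sub_left, toLpLin_one, LinearMap.id_apply,
      real_inner_self_eq_norm_sq]
  rw [h]
  calc _ ≤ ‖toEuclideanLin (Dᵀ * D - 1) x‖ * ‖x‖ := abs_real_inner_le_norm _ _
    _ ≤ ‖Dᵀ * D - 1‖ * ‖x‖ * ‖x‖ := by
        gcongr; exact (toEuclideanCLM (n := m) (𝕜 := ℝ) (Dᵀ * D - 1)).le_opNorm x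
    _ = _ := by ring

end Matrix

lemma IsDecEigenvalueSeq.exists_orthonormalBasis {n : ℕ} {A : Matrix (Fin n) (Fin n) ℝ}
    {hA : A.IsHermitian} {μ : Fin n → ℝ} (hμ : IsDecEigenvalueSeq A hA μ) :
    ∃ v : OrthonormalBasis (Fin n) ℝ (EuclideanSpace ℝ (Fin n)),
      ∀ i, Matrix.toEuclideanLin A (v i) = μ i • v i := by
  obtain ⟨-, e, rfl⟩ := hμ
  refine ⟨hA.eigenvectorBasis.reindex e.symm, fun i => ?_⟩
  simpa [Matrix.toLpLin_apply] using congrArg (WithLp.toLp 2) (hA.mulVec_eigenvectorBasis (e i))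

lemma sub_le_abs_mul_of_mul_le_mul {s t ε a b : ℝ} (hs : 0 < s) (hts : |t - s| ≤ ε * s)
    (h : b * s ≤ a * t) : b - a ≤ |a| * ε := by
  refine le_of_mul_le_mul_right ?_ hs
  calc (b - a) * s ≤ a * (t - s) := by linarith
    _ ≤ |a| * |t - s| := (le_abs_self _).trans (abs_mul _ _).le
    _ ≤ |a| * (ε * s) := by gcongr
    _ = |a| * ε * s := by ring

/-- Relative eigenvalue perturbation bound for a congruence perturbation `Dᵀ A D` of a
real symmetric matrix `A`, with `D` nonsingular. -/
theorem eigenvalue_perturbation_rel_bound {n : ℕ}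
    (A D : Matrix (Fin n) (Fin n) ℝ)
    (hA : A.IsHermitian) (hD : IsUnit D)
    (hDAD : (Dᵀ * A * D).IsHermitian)
    (μ μ' : Fin n → ℝ)
    (hμ : IsDecEigenvalueSeq A hA μ)
    (hμ' : IsDecEigenvalueSeq (Dᵀ * A * D) hDAD μ') :
    ∀ j : Fin n, |μ' j - μ j| ≤ |μ j| * ‖Dᵀ * D - 1‖ := by
  intro j
  obtain ⟨v, hv⟩ := hμ.exists_orthonormalBasis
  obtain ⟨w, hw⟩ := hμ'.exists_orthonormalBasis
  have hinj : Function.Injective (Matrix.toEuclideanLin D) := fun x y hxy =>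
    WithLp.ofLp_injective 2 (Matrix.mulVec_injective_iff_isUnit.mpr hD (congrArg WithLp.ofLp hxy))
  let f := LinearEquiv.ofInjectiveEndo _ hinj
  have hf (x) := Matrix.inner_toEuclideanLin_transpose_mul_mul_self A D x
  obtain ⟨x, hx0, hx⟩ := exists_mul_norm_sq_le_mul_norm_sq_apply hv hw hμ.1 hμ'.1 f hf j
  obtain ⟨y, hy0, hy⟩ := exists_mul_norm_sq_apply_le_mul_norm_sq hv hw hμ.1 hμ'.1 f hf j
  rw [abs_sub_le_iff]
  constructor
  · exact sub_le_abs_mul_of_mul_le_mul (by positivity)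
      (Matrix.abs_norm_sq_toEuclideanLin_sub_norm_sq_le D x) hx
  · have := sub_le_abs_mul_of_mul_le_mul (a := -μ j) (b := -μ' j) (by positivity)
      (Matrix.abs_norm_sq_toEuclideanLin_sub_norm_sq_le D y)
      (by simpa only [neg_mul, neg_le_neg_iff])
    rwa [abs_neg, neg_sub_neg] at this
end

section
/- Let X be an N×n real matrix of rank k with singular values σ₁ ≥ … ≥ σ_k > 0, with truncated SVD X = U Σ Vᵀ, and let Φ be an m×N matrix satisfying (1−ε)‖x‖₂² ≤ ‖Φx‖₂² ≤ (1+ε)‖x‖₂² for all x ∈ colspan(U), where 0 < ε < 1. Then the singular values σ′₁ ≥ … ≥ σ′_k of Y = ΦX satisfy (1−ε)^{1/2} ≤ σ′_j/σ_j ≤ (1+ε)^{1/2} for all j = 1,…,k. -/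
open scoped Matrix

private lemma dot_self_nonneg {α : Type*} [Fintype α] (v : α → ℝ) : 0 ≤ v ⬝ᵥ v :=
  Finset.sum_nonneg fun i _ => mul_self_nonneg (v i)

private lemma dot_self_pos {α : Type*} [Fintype α] (v : α → ℝ) (h : v ≠ 0) : 0 < v ⬝ᵥ v := by
  obtain ⟨i, hi⟩ := Function.ne_iff.mp h
  have : (0:ℝ) < v i * v i := mul_self_pos.mpr hi
  calc (0:ℝ) < v i * v i := this
    _ ≤ v ⬝ᵥ v := Finset.single_le_sum (fun i _ => mul_self_nonneg (v i)) (Finset.mem_univ i)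

private lemma orth_norm {p k : ℕ} (W : Matrix (Fin p) (Fin k) ℝ) (hW : Wᵀ * W = 1)
    (a : Fin k → ℝ) : (W *ᵥ a) ⬝ᵥ (W *ᵥ a) = a ⬝ᵥ a := by
  rw [Matrix.dotProduct_mulVec, ← Matrix.mulVec_transpose, Matrix.mulVec_mulVec, hW,
    Matrix.one_mulVec]

private lemma orth_contr {p k : ℕ} (W : Matrix (Fin p) (Fin k) ℝ) (hW : Wᵀ * W = 1)
    (v : Fin p → ℝ) : (Wᵀ *ᵥ v) ⬝ᵥ (Wᵀ *ᵥ v) ≤ v ⬝ᵥ v := by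
  set d := Wᵀ *ᵥ v with hd
  set q := W *ᵥ d with hq
  have h1 : q ⬝ᵥ q = d ⬝ᵥ d := orth_norm W hW d
  have h2 : v ⬝ᵥ q = d ⬝ᵥ d := by
    rw [hq, Matrix.dotProduct_mulVec, ← Matrix.mulVec_transpose, ← hd]
  have h3 : q ⬝ᵥ v = d ⬝ᵥ d := by rw [dotProduct_comm, h2]
  have h4 : 0 ≤ (v - q) ⬝ᵥ (v - q) := dot_self_nonneg _
  rw [sub_dotProduct, dotProduct_sub, dotProduct_sub] at h4
  linarith

private lemma diag_dot_le {k : ℕ} (τ : Fin k → ℝ) (hτ : ∀ i, 0 ≤ τ i) (j : Fin k)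
    (d : Fin k → ℝ) (hbound : ∀ i, d i ≠ 0 → τ i ≤ τ j) :
    (Matrix.diagonal τ *ᵥ d) ⬝ᵥ (Matrix.diagonal τ *ᵥ d) ≤ τ j * τ j * (d ⬝ᵥ d) := by
  simp only [dotProduct, Matrix.mulVec_diagonal, Finset.mul_sum]
  apply Finset.sum_le_sum
  intro i _
  by_cases h : d i = 0
  · simp [h]
  · have h1 := hbound i h
    have h2 := hτ i
    have h3 : τ i * τ i ≤ τ j * τ j := mul_le_mul h1 h1 h2 (h2.trans h1)
    nlinarith [mul_self_nonneg (d i)]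

private lemma diag_dot_ge {k : ℕ} (τ : Fin k → ℝ) (hτ : ∀ i, 0 ≤ τ i) (j : Fin k)
    (d : Fin k → ℝ) (hbound : ∀ i, d i ≠ 0 → τ j ≤ τ i) :
    τ j * τ j * (d ⬝ᵥ d) ≤ (Matrix.diagonal τ *ᵥ d) ⬝ᵥ (Matrix.diagonal τ *ᵥ d) := by
  simp only [dotProduct, Matrix.mulVec_diagonal, Finset.mul_sum]
  apply Finset.sum_le_sum
  intro i _
  by_cases h : d i = 0
  · simp [h]
  · have h1 := hbound i h
    have h2 := hτ j
    have h3 : τ j * τ j ≤ τ i * τ i := mul_le_mul h1 h1 h2 (h2.trans h1)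
    nlinarith [mul_self_nonneg (d i)]

private lemma exists_good {k : ℕ} (j : Fin k) (M : Matrix (Fin k) (Fin k) ℝ) :
    ∃ c : Fin k → ℝ, c ≠ 0 ∧ (∀ i, j < i → c i = 0) ∧ ∀ i, i < j → (M *ᵥ c) i = 0 := by
  classical
  set p : (Fin (j.val + 1) → ℝ) → (Fin k → ℝ) :=
    fun b i => if h : i.val < j.val + 1 then b ⟨i.val, h⟩ else 0 with hp
  have hpsub : ∀ b b', p (b - b') = p b - p b' := by
    intro b b'; funext i; simp only [hp, Pi.sub_apply]; split <;> simp
  have hpadd : ∀ b b', p (b + b') = p b + p b' := by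
    intro b b'; funext i; simp only [hp, Pi.add_apply]; split <;> simp
  have hpsmul : ∀ (r : ℝ) b, p (r • b) = r • p b := by
    intro r b; funext i; simp only [hp, Pi.smul_apply, smul_eq_mul]; split <;> simp
  let f : (Fin (j.val + 1) → ℝ) →ₗ[ℝ] (Fin j.val → ℝ) :=
    { toFun := fun b i' => (M *ᵥ p b) ⟨i'.val, lt_trans i'.isLt j.isLt⟩
      map_add' := by intro b b'; funext i'; simp [hpadd, Matrix.mulVec_add]
      map_smul' := by intro r b; funext i'; simp [hpsmul, Matrix.mulVec_smul] }
  have hninj : ¬ Function.Injective f := by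
    intro h
    have := LinearMap.finrank_le_finrank_of_injective h
    rw [Module.finrank_fin_fun, Module.finrank_fin_fun] at this
    omega
  obtain ⟨b1, b2, hfe, hne⟩ := Function.not_injective_iff.mp hninj
  set b := b1 - b2 with hb
  have hbne : b ≠ 0 := sub_ne_zero_of_ne hne
  have hfb : f b = 0 := by rw [hb, map_sub, hfe, sub_self]
  obtain ⟨i0, hi0⟩ := Function.ne_iff.mp hbne
  refine ⟨p b, ?_, ?_, ?_⟩
  · intro h0
    have hlt : (i0 : ℕ) < k := lt_of_le_of_lt (Nat.lt_succ_iff.mp i0.isLt) j.isLt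
    have := congrFun h0 ⟨i0.val, hlt⟩
    simp only [hp, Pi.zero_apply] at this
    rw [dif_pos i0.isLt] at this
    apply hi0
    simpa using this
  · intro i hij
    have : ¬ (i : ℕ) < j.val + 1 := by omega
    simp only [hp]
    rw [dif_neg this]
  · intro i hij
    have hlt : (i : ℕ) < j.val := hij
    have := congrFun hfb ⟨i.val, hlt⟩
    simp only [f, LinearMap.coe_mk, AddHom.coe_mk, Pi.zero_apply] at this
    convert this using 2

/-- Preservation of singular values: if `Φ` is a `(1 ± ε)` near-isometry on the column span of
`U` (`X = U Σ Vᵀ` a truncated rank-`k` SVD with singular values `σ`), then any truncated SVD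
`Y = U' Σ' V'ᵀ` of `Y = Φ X` has singular values `σ'` with
`√(1-ε) ≤ σ'_j / σ_j ≤ √(1+ε)` for all `j`. -/
theorem sketched_singular_values {N n m k : ℕ}
    (X : Matrix (Fin N) (Fin n) ℝ)
    (U : Matrix (Fin N) (Fin k) ℝ) (σ : Fin k → ℝ) (V : Matrix (Fin n) (Fin k) ℝ)
    (hU : Uᵀ * U = 1) (hV : Vᵀ * V = 1)
    (hσpos : ∀ i, 0 < σ i) (hσdec : Antitone σ)
    (hSVD : X = U * Matrix.diagonal σ * Vᵀ)
    (ε : ℝ) (hε0 : 0 < ε) (hε1 : ε < 1)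
    (Φ : Matrix (Fin m) (Fin N) ℝ)
    (hiso : ∀ x : Fin N → ℝ, (∃ c : Fin k → ℝ, x = U.mulVec c) →
      (1 - ε) * (x ⬝ᵥ x) ≤ Φ.mulVec x ⬝ᵥ Φ.mulVec x ∧
        Φ.mulVec x ⬝ᵥ Φ.mulVec x ≤ (1 + ε) * (x ⬝ᵥ x))
    (U' : Matrix (Fin m) (Fin k) ℝ) (σ' : Fin k → ℝ) (V' : Matrix (Fin n) (Fin k) ℝ)
    (hU' : U'ᵀ * U' = 1) (hV' : V'ᵀ * V' = 1)
    (hσ'nonneg : ∀ i, 0 ≤ σ' i) (hσ'dec : Antitone σ')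
    (hSVD' : Φ * X = U' * Matrix.diagonal σ' * V'ᵀ) :
    ∀ j : Fin k, Real.sqrt (1 - ε) ≤ σ' j / σ j ∧ σ' j / σ j ≤ Real.sqrt (1 + ε) := by
  intro j
  have hσj := hσpos j
  have hσ'j := hσ'nonneg j
  set D := Matrix.diagonal σ with hD
  set D' := Matrix.diagonal σ' with hD'
  -- lower bound on σ' j
  have hsqlo : (1 - ε) * (σ j * σ j) ≤ σ' j * σ' j := by
    obtain ⟨c, hc0, hcsupp, hcker⟩ := exists_good j (V'ᵀ * V)
    set v := V *ᵥ c with hv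
    have hXv : X *ᵥ v = U *ᵥ (D *ᵥ c) := by
      rw [hSVD, hv, Matrix.mulVec_mulVec, Matrix.mul_assoc (U * D) Vᵀ V, hV, Matrix.mul_one,
        ← Matrix.mulVec_mulVec]
    obtain ⟨hlo, _⟩ := hiso (X *ᵥ v) ⟨D *ᵥ c, hXv⟩
    set d := V'ᵀ *ᵥ v with hd
    have hdker : ∀ i, i < j → d i = 0 := by
      intro i hi
      have := hcker i hi
      rwa [hd, hv, Matrix.mulVec_mulVec]
    have hYv : Φ *ᵥ (X *ᵥ v) = U' *ᵥ (D' *ᵥ d) := by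
      rw [Matrix.mulVec_mulVec, hSVD', hd]
      simp [Matrix.mulVec_mulVec, Matrix.mul_assoc]
    have hxx : (X *ᵥ v) ⬝ᵥ (X *ᵥ v) = (D *ᵥ c) ⬝ᵥ (D *ᵥ c) := by
      rw [hXv, orth_norm U hU]
    have hyy : (Φ *ᵥ (X *ᵥ v)) ⬝ᵥ (Φ *ᵥ (X *ᵥ v)) = (D' *ᵥ d) ⬝ᵥ (D' *ᵥ d) := by
      rw [hYv, orth_norm U' hU']
    have hvv : v ⬝ᵥ v = c ⬝ᵥ c := orth_norm V hV c
    have hdd : d ⬝ᵥ d ≤ c ⬝ᵥ c := hvv ▸ orth_contr V' hV' v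
    have h1 : σ j * σ j * (c ⬝ᵥ c) ≤ (D *ᵥ c) ⬝ᵥ (D *ᵥ c) := by
      apply diag_dot_ge σ (fun i => (hσpos i).le) j c
      intro i hi
      exact hσdec (le_of_not_gt fun h => hi (hcsupp i h))
    have h2 : (D' *ᵥ d) ⬝ᵥ (D' *ᵥ d) ≤ σ' j * σ' j * (d ⬝ᵥ d) := by
      apply diag_dot_le σ' hσ'nonneg j d
      intro i hi
      exact hσ'dec (le_of_not_gt fun h => hi (hdker i h))
    have hcc : 0 < c ⬝ᵥ c := dot_self_pos c hc0
    rw [hxx, hyy] at hlo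
    have hdd0 : 0 ≤ d ⬝ᵥ d := dot_self_nonneg d
    have key : (1 - ε) * (σ j * σ j) * (c ⬝ᵥ c) ≤ σ' j * σ' j * (c ⬝ᵥ c) := by
      calc (1 - ε) * (σ j * σ j) * (c ⬝ᵥ c) = (1 - ε) * (σ j * σ j * (c ⬝ᵥ c)) := by ring
        _ ≤ (1 - ε) * ((D *ᵥ c) ⬝ᵥ (D *ᵥ c)) :=
            mul_le_mul_of_nonneg_left h1 (by linarith : (0:ℝ) ≤ 1 - ε)
        _ ≤ (D' *ᵥ d) ⬝ᵥ (D' *ᵥ d) := hlo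
        _ ≤ σ' j * σ' j * (d ⬝ᵥ d) := h2
        _ ≤ σ' j * σ' j * (c ⬝ᵥ c) :=
            mul_le_mul_of_nonneg_left hdd (mul_nonneg hσ'j hσ'j)
    exact le_of_mul_le_mul_right key hcc
  -- upper bound on σ' j
  have hsqhi : σ' j * σ' j ≤ (1 + ε) * (σ j * σ j) := by
    obtain ⟨c, hc0, hcsupp, hcker⟩ := exists_good j (Vᵀ * V')
    set v := V' *ᵥ c with hv
    set e := Vᵀ *ᵥ v with he
    have heker : ∀ i, i < j → e i = 0 := by
      intro i hi
      have := hcker i hi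
      rwa [he, hv, Matrix.mulVec_mulVec]
    have hXv : X *ᵥ v = U *ᵥ (D *ᵥ e) := by
      rw [hSVD, he]
      simp [Matrix.mulVec_mulVec, Matrix.mul_assoc]
    obtain ⟨_, hhi⟩ := hiso (X *ᵥ v) ⟨D *ᵥ e, hXv⟩
    have hYv : Φ *ᵥ (X *ᵥ v) = U' *ᵥ (D' *ᵥ c) := by
      rw [Matrix.mulVec_mulVec, hSVD', hv, Matrix.mulVec_mulVec,
        Matrix.mul_assoc (U' * D') V'ᵀ V', hV', Matrix.mul_one, ← Matrix.mulVec_mulVec]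
    have hxx : (X *ᵥ v) ⬝ᵥ (X *ᵥ v) = (D *ᵥ e) ⬝ᵥ (D *ᵥ e) := by
      rw [hXv, orth_norm U hU]
    have hyy : (Φ *ᵥ (X *ᵥ v)) ⬝ᵥ (Φ *ᵥ (X *ᵥ v)) = (D' *ᵥ c) ⬝ᵥ (D' *ᵥ c) := by
      rw [hYv, orth_norm U' hU']
    have hvv : v ⬝ᵥ v = c ⬝ᵥ c := orth_norm V' hV' c
    have hee : e ⬝ᵥ e ≤ c ⬝ᵥ c := hvv ▸ orth_contr V hV v
    have h1 : (D *ᵥ e) ⬝ᵥ (D *ᵥ e) ≤ σ j * σ j * (e ⬝ᵥ e) := by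
      apply diag_dot_le σ (fun i => (hσpos i).le) j e
      intro i hi
      exact hσdec (le_of_not_gt fun h => hi (heker i h))
    have h2 : σ' j * σ' j * (c ⬝ᵥ c) ≤ (D' *ᵥ c) ⬝ᵥ (D' *ᵥ c) := by
      apply diag_dot_ge σ' hσ'nonneg j c
      intro i hi
      exact hσ'dec (le_of_not_gt fun h => hi (hcsupp i h))
    have hcc : 0 < c ⬝ᵥ c := dot_self_pos c hc0
    rw [hxx, hyy] at hhi
    have key : σ' j * σ' j * (c ⬝ᵥ c) ≤ (1 + ε) * (σ j * σ j) * (c ⬝ᵥ c) := by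
      calc σ' j * σ' j * (c ⬝ᵥ c) ≤ (D' *ᵥ c) ⬝ᵥ (D' *ᵥ c) := h2
        _ ≤ (1 + ε) * ((D *ᵥ e) ⬝ᵥ (D *ᵥ e)) := hhi
        _ ≤ (1 + ε) * (σ j * σ j * (e ⬝ᵥ e)) :=
            mul_le_mul_of_nonneg_left h1 (by linarith : (0:ℝ) ≤ 1 + ε)
        _ ≤ (1 + ε) * (σ j * σ j * (c ⬝ᵥ c)) := mul_le_mul_of_nonneg_left
            (mul_le_mul_of_nonneg_left hee (mul_nonneg hσj.le hσj.le))
            (by linarith : (0:ℝ) ≤ 1 + ε)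
        _ = (1 + ε) * (σ j * σ j) * (c ⬝ᵥ c) := by ring
    exact le_of_mul_le_mul_right key hcc
  constructor
  · rw [le_div_iff₀ hσj]
    have h := Real.sqrt_le_sqrt hsqlo
    rwa [Real.sqrt_mul (by linarith : (0:ℝ) ≤ 1 - ε), Real.sqrt_mul_self hσj.le,
      Real.sqrt_mul_self hσ'j] at h
  · rw [div_le_iff₀ hσj]
    have h := Real.sqrt_le_sqrt hsqhi
    rwa [Real.sqrt_mul (by linarith : (0:ℝ) ≤ 1 + ε), Real.sqrt_mul_self hσj.le,
      Real.sqrt_mul_self hσ'j] at h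
end

section
/- Let H = UΓU* and H̃ = H + δH = ŨΓ̃Ũ* be p×p positive definite Hermitian matrices with U, Ũ unitary and diagonal Γ, Γ̃, and let S = U*Ũ and η = ‖H^{-1/2} δH H^{-1/2}‖₂ < 1. Then for any j and any index set T not containing j, (∑_{i∈T} |S_{ij}|²)^{1/2} ≤ min{1, max_{i∈T} (γ_i^{1/2} γ̃_j^{1/2} / |γ_i − γ̃_j|) · η/√(1−η)}. -/
open scoped Matrix Matrix.Norms.L2Operator

/-!
Work in the eigenbasis of `H` and put `x = Γ^{-1/2} S Γ̃^{1/2}`, `w = Γ^{1/2} S Γ̃^{-1/2}`.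
Then `x⋆ w = 1`, `U (x x⋆ - 1) U⋆ = H^{-1/2} δH H^{-1/2}` (so `‖x x⋆ - 1‖ = η`), and
`(x - w)ᵢⱼ = Sᵢⱼ (γ̃ⱼ - γᵢ) / √(γᵢ γ̃ⱼ)`. With `b = x x⋆ - 1` one has `x - w = b w` and
`w w⋆ = (1 + b)⁻¹`, so the Neumann series gives `‖w‖² ≤ (1 - η)⁻¹`, hence `‖x - w‖ ≤ η / √(1 - η)`.
Finally a column of a matrix has Euclidean norm at most the operator norm, applied to `x - w`
(whose entries dominate `Sᵢⱼ` up to the factors `√(γᵢ γ̃ⱼ) / |γᵢ - γ̃ⱼ|`) and to the unitary `S`.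
-/

theorem mul_mul_cancel_left_of_mul_eq_one {M : Type*} [Monoid M] {a b : M} (h : a * b = 1)
    (c : M) : a * (b * c) = c := by
  rw [← mul_assoc, h, one_mul]

theorem sqrt_mul_sqrt_div_abs_sub_mul_abs_div_sub_div {a b : ℝ} (ha : 0 < a) (hb : 0 < b)
    (hab : a ≠ b) : √a * √b / |a - b| * |√b / √a - √a / √b| = 1 := by
  have hsa := Real.sqrt_pos.2 ha
  have hsb := Real.sqrt_pos.2 hb
  have h : √b / √a - √a / √b = (b - a) / (√a * √b) := by
    field_simp
    rw [Real.sq_sqrt hb.le, Real.sq_sqrt ha.le]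
  have hab' : |a - b| ≠ 0 := abs_ne_zero.2 (sub_ne_zero.2 hab)
  rw [h, abs_div, abs_sub_comm, abs_of_pos (mul_pos hsa hsb)]
  field_simp

section NormedRing

variable {R : Type*} [NormedRing R] [HasSummableGeomSeries R] [NormOneClass R]

theorem norm_le_inv_one_sub_of_one_add_mul_eq_one {b c : R} (hb : ‖b‖ < 1)
    (h : (1 + b) * c = 1) : ‖c‖ ≤ (1 - ‖b‖)⁻¹ := by
  have hnb : ‖-b‖ < 1 := by rwa [norm_neg]
  have hc : ∑' n : ℕ, (-b) ^ n = c :=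
    Units.inv_eq_of_mul_eq_one_right (u := Units.oneSub (-b) hnb) (by simpa using h)
  simpa [hc] using tsum_geometric_le_of_norm_lt_one (-b) hnb

variable [StarRing R] [CStarRing R]

theorem norm_sub_le_of_star_mul_eq_one {x w : R} (hxw : star x * w = 1) (hwx : w * star x = 1)
    (hx : ‖x * star x - 1‖ < 1) :
    ‖x - w‖ ≤ ‖x * star x - 1‖ / √(1 - ‖x * star x - 1‖) := by
  set b := x * star x - 1
  have hww : (1 + b) * (w * star w) = 1 := by
    have hxw' : x * star w = 1 := by simpa using congrArg star hwx
    rw [add_sub_cancel, mul_assoc, ← mul_assoc (star x), hxw, one_mul, hxw']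
  have hw : ‖w‖ ≤ (√(1 - ‖b‖))⁻¹ := by
    rw [← Real.sqrt_inv, Real.le_sqrt (norm_nonneg w) (inv_nonneg.2 (sub_nonneg.2 hx.le)), sq,
      ← CStarRing.norm_self_mul_star]
    exact norm_le_inv_one_sub_of_one_add_mul_eq_one hx hww
  have hbw : b * w = x - w := by
    rw [sub_mul, mul_assoc, hxw, mul_one, one_mul]
  rw [← hbw, div_eq_mul_inv]
  exact (norm_mul_le b w).trans (mul_le_mul_of_nonneg_left hw (norm_nonneg b))

end NormedRing

namespace Matrix

section Column

variable {m n 𝕜 : Type*} [Fintype m] [Fintype n] [DecidableEq n] [RCLike 𝕜]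

theorem sum_norm_sq_apply_le_l2_opNorm_sq (A : Matrix m n 𝕜) (j : n) :
    ∑ i, ‖A i j‖ ^ 2 ≤ ‖A‖ ^ 2 := by
  have h := A.l2_opNorm_mulVec (EuclideanSpace.single j 1)
  rw [PiLp.norm_single, norm_one, mul_one] at h
  have := pow_le_pow_left₀ (norm_nonneg _) h 2
  rw [EuclideanSpace.norm_sq_eq] at this
  simpa [EuclideanSpace.single, mulVec_single_one] using this

theorem sqrt_sum_norm_sq_le_mul_l2_opNorm (A : Matrix m n 𝕜) (j : n) (v : m → 𝕜)
    (T : Finset m) {M : ℝ} (hM : 0 ≤ M) (hv : ∀ i ∈ T, ‖v i‖ ≤ M * ‖A i j‖) :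
    √(∑ i ∈ T, ‖v i‖ ^ 2) ≤ M * ‖A‖ := by
  rw [Real.sqrt_le_left (mul_nonneg hM (norm_nonneg A))]
  calc ∑ i ∈ T, ‖v i‖ ^ 2 ≤ ∑ i ∈ T, M ^ 2 * ‖A i j‖ ^ 2 :=
        Finset.sum_le_sum fun i hi => by
          rw [← mul_pow]
          exact pow_le_pow_left₀ (norm_nonneg _) (hv i hi) 2
    _ ≤ M ^ 2 * ∑ i, ‖A i j‖ ^ 2 := by
        rw [← Finset.mul_sum]
        gcongr
        exact T.subset_univ
    _ ≤ (M * ‖A‖) ^ 2 := by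
        rw [mul_pow]
        gcongr
        exact sum_norm_sq_apply_le_l2_opNorm_sq A j

theorem sqrt_sum_norm_sq_apply_le_one [Nonempty n] {S : Matrix n n 𝕜} (hS : Sᴴ * S = 1) (j : n)
    (T : Finset n) : √(∑ i ∈ T, ‖S i j‖ ^ 2) ≤ 1 := by
  have hSnorm : ‖S‖ = 1 := CStarRing.norm_of_mem_unitary (mem_unitaryGroup_iff'.2 hS)
  simpa [hSnorm] using S.sqrt_sum_norm_sq_le_mul_l2_opNorm j (S · j) T zero_le_one (by simp)

end Column

variable {n : Type*} [DecidableEq n]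

theorem diagonal_ofReal_conjTranspose (d : n → ℝ) :
    (diagonal fun i => (d i : ℂ))ᴴ = diagonal fun i => (d i : ℂ) := by
  simp [diagonal_conjTranspose, Pi.star_def]

variable [Fintype n]

noncomputable def diagScale (d e : n → ℝ) (S : Matrix n n ℂ) : Matrix n n ℂ :=
  diagonal (fun i => (d i : ℂ)) * S * diagonal fun j => (e j : ℂ)

variable {d d' e e' : n → ℝ} {S : Matrix n n ℂ}

theorem diagScale_apply (i j : n) : diagScale d e S i j = d i * S i j * e j := by
  simp only [diagScale, mul_diagonal, diagonal_mul]

theorem conjTranspose_diagScale : (diagScale d e S)ᴴ = diagScale e d Sᴴ := by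
  simp only [diagScale, conjTranspose_mul, diagonal_ofReal_conjTranspose, Matrix.mul_assoc]

theorem diagonal_ofReal_mul_diagonal_ofReal_eq_one (h : ∀ i, d i * e i = 1) :
    (diagonal fun i => (d i : ℂ)) * (diagonal fun i => (e i : ℂ)) = 1 := by
  rw [diagonal_mul_diagonal, ← diagonal_one]
  congr 1; funext i
  exact_mod_cast h i

theorem conjTranspose_diagScale_mul_diagScale_eq_one (hS : Sᴴ * S = 1)
    (hd : ∀ i, d i * d' i = 1) (he : ∀ j, e j * e' j = 1) :
    (diagScale d e S)ᴴ * diagScale d' e' S = 1 := by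
  rw [conjTranspose_diagScale]
  simp only [diagScale, Matrix.mul_assoc,
    mul_mul_cancel_left_of_mul_eq_one (diagonal_ofReal_mul_diagonal_ofReal_eq_one hd),
    mul_mul_cancel_left_of_mul_eq_one hS, diagonal_ofReal_mul_diagonal_ofReal_eq_one he]

theorem diagScale_mul_conjTranspose_self :
    diagScale d e S * (diagScale d e S)ᴴ =
      diagScale d d (S * (diagonal fun j => ((e j * e j : ℝ) : ℂ)) * Sᴴ) := by
  rw [conjTranspose_diagScale]
  simp only [diagScale, Matrix.mul_assoc]
  rw [← Matrix.mul_assoc (diagonal _) (diagonal _), diagonal_mul_diagonal]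
  push_cast
  rfl

theorem diagScale_sqrt_inv_diagonal_eq_one {γ : n → ℝ} (hγ : ∀ i, 0 < γ i) :
    diagScale (fun i => (√(γ i))⁻¹) (fun i => (√(γ i))⁻¹) (diagonal fun i => (γ i : ℂ)) = 1 := by
  rw [diagScale, diagonal_mul_diagonal, diagonal_mul_diagonal, ← diagonal_one]
  congr 1; funext i
  rw [← Complex.ofReal_mul, ← Complex.ofReal_mul, ← Complex.ofReal_one]
  congr 1
  rw [mul_right_comm, ← mul_inv, Real.mul_self_sqrt (hγ i).le, inv_mul_cancel₀ (hγ i).ne']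

theorem conj_diagonal_sqrt_inv_mul_sub_mul_eq {U Ut : Matrix n n ℂ} {γ γt : n → ℝ}
    (hU : Uᴴ * U = 1) (hγ : ∀ i, 0 < γ i) (hγt : ∀ i, 0 ≤ γt i) :
    U * (diagonal fun i => ((√(γ i))⁻¹ : ℂ)) * Uᴴ *
        (Ut * (diagonal fun i => (γt i : ℂ)) * Utᴴ - U * (diagonal fun i => (γ i : ℂ)) * Uᴴ) *
        (U * (diagonal fun i => ((√(γ i))⁻¹ : ℂ)) * Uᴴ) =
      U * (diagScale (fun i => (√(γ i))⁻¹) (fun j => √(γt j)) (Uᴴ * Ut) *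
        (diagScale (fun i => (√(γ i))⁻¹) (fun j => √(γt j)) (Uᴴ * Ut))ᴴ - 1) * Uᴴ := by
  have hγt' : (fun j => ((√(γt j) * √(γt j) : ℝ) : ℂ)) = fun j => (γt j : ℂ) := by
    funext j; rw [Real.mul_self_sqrt (hγt j)]
  rw [diagScale_mul_conjTranspose_self, hγt', ← diagScale_sqrt_inv_diagonal_eq_one hγ]
  simp only [diagScale, Complex.ofReal_inv, conjTranspose_mul, conjTranspose_conjTranspose,
    Matrix.mul_sub, Matrix.sub_mul, Matrix.mul_assoc, mul_mul_cancel_left_of_mul_eq_one hU]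

theorem norm_apply_eq_mul_norm_diagScale_sqrt_sub_apply {γ γt : n → ℝ} (hγ : ∀ i, 0 < γ i)
    (hγt : ∀ i, 0 < γt i) {i j : n} (hij : γ i ≠ γt j) :
    ‖S i j‖ = √(γ i) * √(γt j) / |γ i - γt j| *
      ‖(diagScale (fun i => (√(γ i))⁻¹) (fun j => √(γt j)) S -
        diagScale (fun i => √(γ i)) (fun j => (√(γt j))⁻¹) S) i j‖ := by
  have hentry : (diagScale (fun i => (√(γ i))⁻¹) (fun j => √(γt j)) S -
      diagScale (fun i => √(γ i)) (fun j => (√(γt j))⁻¹) S) i j =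
      S i j * ((√(γt j) / √(γ i) - √(γ i) / √(γt j) : ℝ) : ℂ) := by
    rw [sub_apply, diagScale_apply, diagScale_apply]
    push_cast
    ring
  rw [hentry, norm_mul, Complex.norm_real, Real.norm_eq_abs, mul_left_comm,
    sqrt_mul_sqrt_div_abs_sub_mul_abs_div_sub_div (hγ i) (hγt j) hij, mul_one]

end Matrix

theorem mathias_set_form_general {p : ℕ}
    (U Ut δH : Matrix (Fin p) (Fin p) ℂ) (γ γt : Fin p → ℝ)
    (hUunit : Uᴴ * U = 1 ∧ U * Uᴴ = 1)
    (hUtunit : Utᴴ * Ut = 1 ∧ Ut * Utᴴ = 1)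
    (hγ : ∀ i, 0 < γ i) (hγt : ∀ i, 0 < γt i)
    (H Ht : Matrix (Fin p) (Fin p) ℂ)
    (hH : H = U * Matrix.diagonal (fun i => (γ i : ℂ)) * Uᴴ)
    (hHt : Ht = Ut * Matrix.diagonal (fun i => (γt i : ℂ)) * Utᴴ)
    (hpert : Ht = H + δH)
    (Hinvhalf : Matrix (Fin p) (Fin p) ℂ)
    (hHinvhalf : Hinvhalf = U * Matrix.diagonal (fun i => ((Real.sqrt (γ i))⁻¹ : ℂ)) * Uᴴ)
    (S : Matrix (Fin p) (Fin p) ℂ) (hS : S = Uᴴ * Ut)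
    (η : ℝ) (hη : η = ‖Hinvhalf * δH * Hinvhalf‖) (hη1 : η < 1) :
    ∀ j : Fin p, ∀ T : Finset (Fin p), j ∉ T → ∀ hT : T.Nonempty,
      Real.sqrt (∑ i ∈ T, ‖S i j‖ ^ 2) ≤ 1 ∧
      ((∀ i ∈ T, γ i ≠ γt j) →
        Real.sqrt (∑ i ∈ T, ‖S i j‖ ^ 2) ≤
          min 1 ((T.sup' hT fun i => Real.sqrt (γ i) * Real.sqrt (γt j) / |γ i - γt j|) *
            (η / Real.sqrt (1 - η)))) := by
  intro j T _ hT
  have : Nonempty (Fin p) := ⟨j⟩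
  have hU : U ∈ unitary (Matrix (Fin p) (Fin p) ℂ) := hUunit
  have hSS : Sᴴ * S = 1 := by
    rw [hS, Matrix.conjTranspose_mul, Matrix.conjTranspose_conjTranspose, Matrix.mul_assoc,
      mul_mul_cancel_left_of_mul_eq_one hUunit.2, hUtunit.1]
  have hcol := Matrix.sqrt_sum_norm_sq_apply_le_one hSS j T
  refine ⟨hcol, fun hne => le_min hcol ?_⟩
  set x := Matrix.diagScale (fun i => (√(γ i))⁻¹) (fun j => √(γt j)) S
  set w := Matrix.diagScale (fun i => √(γ i)) (fun j => (√(γt j))⁻¹) S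
  have hηx : η = ‖x * xᴴ - 1‖ := by
    rw [hη, eq_sub_of_add_eq' hpert.symm, hHinvhalf, hHt, hH,
      Matrix.conj_diagonal_sqrt_inv_mul_sub_mul_eq hUunit.1 hγ fun i => (hγt i).le, ← hS,
      CStarRing.norm_mul_mem_unitary (U := Uᴴ) _ (Unitary.star_mem hU),
      CStarRing.norm_mem_unitary_mul _ hU]
  have hxw : xᴴ * w = 1 :=
    Matrix.conjTranspose_diagScale_mul_diagScale_eq_one hSS
      (fun i => inv_mul_cancel₀ (Real.sqrt_pos.2 (hγ i)).ne')
      (fun j => mul_inv_cancel₀ (Real.sqrt_pos.2 (hγt j)).ne')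
  have hnorm : ‖x - w‖ ≤ η / √(1 - η) := by
    rw [hηx] at hη1 ⊢
    exact norm_sub_le_of_star_mul_eq_one hxw (mul_eq_one_comm.1 hxw) hη1
  set c : Fin p → ℝ := fun i => √(γ i) * √(γt j) / |γ i - γt j|
  obtain ⟨i₀, hi₀⟩ := id hT
  have hM : 0 ≤ T.sup' hT c := (by positivity : 0 ≤ c i₀).trans (T.le_sup' c hi₀)
  calc √(∑ i ∈ T, ‖S i j‖ ^ 2) ≤ T.sup' hT c * ‖x - w‖ :=
        (x - w).sqrt_sum_norm_sq_le_mul_l2_opNorm j (S · j) T hM fun i hi => by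
          rw [Matrix.norm_apply_eq_mul_norm_diagScale_sqrt_sub_apply hγ hγt (hne i hi)]
          gcongr
          exact T.le_sup' c hi
    _ ≤ T.sup' hT c * (η / √(1 - η)) := by gcongr

/-- Mathias's relative perturbation bound on eigenvector inner products (set form).
`H = U Γ U*` and `H̃ = H + δH = Ũ Γ̃ Ũ*` are positive definite Hermitian with `U`, `Ũ` unitary
and `Γ, Γ̃` diagonal; `S = U* Ũ` and `η = ‖H^{-1/2} δH H^{-1/2}‖₂ < 1`.  Then for any `j` and
any (nonempty) index set `T` not containing `j`,
`(∑_{i∈T} |S_{ij}|²)^{1/2} ≤ min {1, max_{i∈T} (√γᵢ √γ̃ⱼ / |γᵢ − γ̃ⱼ|) · η / √(1−η)}`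
(the second bound stated under the proviso `γᵢ ≠ γ̃ⱼ` on `T`, so each fraction is finite;
otherwise the minimum is `1`). -/
theorem mathias_set_form {p : ℕ}
    (U Ut δH : Matrix (Fin p) (Fin p) ℂ) (γ γt : Fin p → ℝ)
    (hUunit : Uᴴ * U = 1 ∧ U * Uᴴ = 1)
    (hUtunit : Utᴴ * Ut = 1 ∧ Ut * Utᴴ = 1)
    (hγ : ∀ i, 0 < γ i) (hγt : ∀ i, 0 < γt i)
    (H Ht : Matrix (Fin p) (Fin p) ℂ)
    (hH : H = U * Matrix.diagonal (fun i => (γ i : ℂ)) * Uᴴ)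
    (hHt : Ht = Ut * Matrix.diagonal (fun i => (γt i : ℂ)) * Utᴴ)
    (hpert : Ht = H + δH)
    (hδH : δH.IsHermitian)
    (Hinvhalf : Matrix (Fin p) (Fin p) ℂ)
    (hHinvhalf : Hinvhalf = U * Matrix.diagonal (fun i => ((Real.sqrt (γ i))⁻¹ : ℂ)) * Uᴴ)
    (S : Matrix (Fin p) (Fin p) ℂ) (hS : S = Uᴴ * Ut)
    (η : ℝ) (hη : η = ‖Hinvhalf * δH * Hinvhalf‖) (hη1 : η < 1) :
    ∀ j : Fin p, ∀ T : Finset (Fin p), j ∉ T → ∀ hT : T.Nonempty,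
      Real.sqrt (∑ i ∈ T, ‖S i j‖ ^ 2) ≤ 1 ∧
      ((∀ i ∈ T, γ i ≠ γt j) →
        Real.sqrt (∑ i ∈ T, ‖S i j‖ ^ 2) ≤
          min 1 ((T.sup' hT fun i => Real.sqrt (γ i) * Real.sqrt (γt j) / |γ i - γt j|) *
            (η / Real.sqrt (1 - η)))) :=
  mathias_set_form_general U Ut δH γ γt hUunit hUtunit hγ hγt H Ht hH hHt hpert Hinvhalf hHinvhalf S
    hS η hη hη1
end

section
/- Let Φ be an m×N random matrix satisfying the distributional JL property: for any fixed x ∈ ℝᴺ and 0 < ε < 1, Pr[|‖Φx‖₂² − ‖x‖₂²| > ε‖x‖₂²] ≤ 2e^{−m f(ε)} with f(ε) > 0. Let 𝒳 be a k-dimensional subspace of ℝᴺ, and suppose m ≥ (k log(42/ε) + log(2/δ)) / f(ε/√2). Then with probability at least 1 − δ, √(1−ε)‖x‖₂ ≤ ‖Φx‖₂ ≤ √(1+ε)‖x‖₂ for all x ∈ 𝒳. -/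
/-!
The unit sphere of a `k`-dimensional normed space has an `a`-net of at most `(3/a)^k` points: a
maximal `a`-separated set, whose size is bounded by comparing the volume of the disjoint
`a/2`-balls around its points with that of the ball of radius `1 + a/2`. Take `a = ε/14`, so that
`3/a = 42/ε`, and `η = ε/√2`. By the union bound over the net, with probability at least
`1 - (42/ε)^k · 2e^{-m f(η)} ≥ 1 - δ` every net point `q` satisfies `|‖Φq‖² - 1| ≤ η`. On that
event, splitting a unit vector `x` as `q + (x - q)` gives `‖Φ‖ ≤ √(1+η)/(1-a)` and
`‖Φx‖ ≥ √(1-η) - a‖Φ‖`; since `η ≤ 5ε/7`, these constants lie within `√(1 ± ε)`.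
-/

open MeasureTheory Metric Module
open scoped ENNReal Matrix

section Net

variable {E : Type*} [NormedAddCommGroup E] [NormedSpace ℝ E] [FiniteDimensional ℝ E]

theorem card_le_of_pairwise_lt_dist {a : ℝ} (ha0 : 0 < a) (ha1 : a ≤ 1) {T : Finset E}
    (hT : ∀ q ∈ T, ‖q‖ ≤ 1) (hsep : (T : Set E).Pairwise fun x y ↦ a < dist x y) :
    (T.card : ℝ) ≤ (3 / a) ^ finrank ℝ E := by
  borelize E
  let μ : Measure E := Measure.addHaar
  set k := finrank ℝ E
  have hdisj : (T : Set E).PairwiseDisjoint fun q ↦ ball q (a / 2) :=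
    fun q hq q' hq' hne ↦ ball_disjoint_ball (by linarith [hsep hq hq' hne])
  have hsub : (⋃ q ∈ T, ball q (a / 2)) ⊆ ball 0 (1 + a / 2) := by
    simp only [Set.iUnion_subset_iff]
    intro q hq
    exact ball_subset_ball' (by rw [dist_zero_right]; linarith [hT q hq])
  have hvol : (T.card : ℝ≥0∞) * ENNReal.ofReal ((a / 2) ^ k) * μ (ball 0 1)
      ≤ ENNReal.ofReal ((1 + a / 2) ^ k) * μ (ball 0 1) :=
    calc (T.card : ℝ≥0∞) * ENNReal.ofReal ((a / 2) ^ k) * μ (ball 0 1)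
        = ∑ q ∈ T, μ (ball q (a / 2)) := by
          simp [μ.addHaar_ball_of_pos _ (half_pos ha0), mul_assoc, k]
      _ = μ (⋃ q ∈ T, ball q (a / 2)) :=
          (measure_biUnion_finset hdisj fun _ _ ↦ measurableSet_ball).symm
      _ ≤ μ (ball 0 (1 + a / 2)) := measure_mono hsub
      _ = ENNReal.ofReal ((1 + a / 2) ^ k) * μ (ball 0 1) :=
          μ.addHaar_ball_of_pos _ (by positivity)
  have hreal : (T.card : ℝ) * (a / 2) ^ k ≤ (1 + a / 2) ^ k := by
    rw [ENNReal.mul_le_mul_iff_left (measure_ball_pos μ 0 one_pos).ne' measure_ball_lt_top.ne,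
      ← ENNReal.ofReal_natCast, ← ENNReal.ofReal_mul (by positivity),
      ENNReal.ofReal_le_ofReal_iff (by positivity)] at hvol
    exact hvol
  calc (T.card : ℝ) ≤ (1 + a / 2) ^ k / (a / 2) ^ k := by
        rwa [le_div_iff₀ (by positivity)]
    _ = ((2 + a) / a) ^ k := by rw [← div_pow]; congr 1; field_simp
    _ ≤ (3 / a) ^ k := by gcongr; linarith

theorem exists_finset_sphere_net {a : ℝ} (ha0 : 0 < a) (ha1 : a ≤ 1) :
    ∃ T : Finset E, (T.card : ℝ) ≤ (3 / a) ^ finrank ℝ E ∧ (∀ q ∈ T, ‖q‖ = 1) ∧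
      ∀ x : E, ‖x‖ = 1 → ∃ q ∈ T, ‖x - q‖ ≤ a := by
  classical
  let IsPacking (T : Finset E) : Prop :=
    (∀ q ∈ T, ‖q‖ = 1) ∧ (T : Set E).Pairwise fun x y ↦ a < dist x y
  have hbound : ∀ T, IsPacking T → (T.card : ℝ) ≤ (3 / a) ^ finrank ℝ E :=
    fun T hT ↦ card_le_of_pairwise_lt_dist ha0 ha1 (fun q hq ↦ (hT.1 q hq).le) hT.2
  -- a packing of maximal cardinality is a net
  have hbdd : BddAbove {n | ∃ T, IsPacking T ∧ T.card = n} :=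
    ⟨⌈(3 / a) ^ finrank ℝ E⌉₊, by
      rintro _ ⟨T, hT, rfl⟩
      exact_mod_cast (hbound T hT).trans (Nat.le_ceil _)⟩
  have hne : {n | ∃ T, IsPacking T ∧ T.card = n}.Nonempty := ⟨0, ∅, by simp [IsPacking], rfl⟩
  obtain ⟨T, hT, hcard⟩ := Nat.sSup_mem hne hbdd
  refine ⟨T, hbound T hT, hT.1, fun x hx ↦ ?_⟩
  by_contra! hfar
  have hxT : x ∉ T := fun hxT ↦ by simpa using (ha0.trans (hfar x hxT))
  have hins : IsPacking (insert x T) := by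
    refine ⟨Finset.forall_mem_insert _ _ _ |>.mpr ⟨hx, hT.1⟩, ?_⟩
    rw [Finset.coe_insert, Set.pairwise_insert]
    exact ⟨hT.2, fun q hq _ ↦ ⟨by rw [dist_eq_norm]; exact hfar q hq,
      by rw [dist_comm, dist_eq_norm]; exact hfar q hq⟩⟩
  have := le_csSup hbdd ⟨_, hins, rfl⟩
  rw [Finset.card_insert_of_notMem hxT] at this
  omega

end Net

namespace ContinuousLinearMap

variable {E F : Type*} [NormedAddCommGroup E] [NormedSpace ℝ E] [SeminormedAddCommGroup F]
  [NormedSpace ℝ F] (T : E →L[ℝ] F) {S : Set E} {a α β : ℝ}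

theorem opNorm_le_of_sphere_net (ha0 : 0 ≤ a) (ha1 : a < 1) (hβ : 0 ≤ β)
    (hnet : ∀ x : E, ‖x‖ = 1 → ∃ q ∈ S, ‖x - q‖ ≤ a) (hS : ∀ q ∈ S, ‖T q‖ ≤ β) :
    ‖T‖ ≤ β / (1 - a) := by
  have h : ‖T‖ ≤ β + ‖T‖ * a := by
    refine T.opNorm_le_of_unit_norm (by positivity) fun x hx ↦ ?_
    obtain ⟨q, hq, hxq⟩ := hnet x hx
    calc ‖T x‖ = ‖T q + T (x - q)‖ := by rw [← map_add, add_sub_cancel]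
      _ ≤ ‖T q‖ + ‖T‖ * ‖x - q‖ := norm_add_le_of_le le_rfl (T.le_opNorm _)
      _ ≤ β + ‖T‖ * a := by gcongr; exact hS q hq
  rw [le_div_iff₀ (by linarith)]
  linarith

theorem mul_norm_le_norm_apply_of_sphere_net (ha0 : 0 ≤ a) (ha1 : a < 1) (hβ : 0 ≤ β)
    (hnet : ∀ x : E, ‖x‖ = 1 → ∃ q ∈ S, ‖x - q‖ ≤ a) (hS : ∀ q ∈ S, α ≤ ‖T q‖ ∧ ‖T q‖ ≤ β)
    (x : E) : (α - β / (1 - a) * a) * ‖x‖ ≤ ‖T x‖ := by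
  have hunit : ∀ z : E, ‖z‖ = 1 → α - β / (1 - a) * a ≤ ‖T z‖ := by
    intro z hz
    obtain ⟨q, hq, hzq⟩ := hnet z hz
    have hT := T.opNorm_le_of_sphere_net ha0 ha1 hβ hnet fun q hq ↦ (hS q hq).2
    calc α - β / (1 - a) * a ≤ ‖T q‖ - ‖T‖ * ‖z - q‖ := by
          gcongr
          exact (hS q hq).1
      _ ≤ ‖T q‖ - ‖T (z - q)‖ := by gcongr; exact T.le_opNorm _
      _ ≤ ‖T z‖ := by
          rw [map_sub]
          linarith [norm_sub_norm_le (T q) (T z), norm_sub_rev (T q) (T z)]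
  rcases eq_or_ne x 0 with rfl | hx
  · simp
  have hx' : 0 < ‖x‖ := norm_pos_iff.mpr hx
  have := hunit (‖x‖⁻¹ • x) (by rw [norm_smul, norm_inv, norm_norm, inv_mul_cancel₀ hx'.ne'])
  rw [map_smul, norm_smul, norm_inv, norm_norm, le_inv_mul_iff₀ hx'] at this
  linarith

end ContinuousLinearMap

theorem EuclideanSpace.dotProduct_self_eq_norm_toLp_sq {ι : Type*} [Fintype ι] (x : ι → ℝ) :
    x ⬝ᵥ x = ‖WithLp.toLp 2 x‖ ^ 2 := by
  rw [← real_inner_self_eq_norm_sq, EuclideanSpace.inner_toLp_toLp, star_trivial]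

theorem EuclideanSpace.sqrt_dotProduct_self {ι : Type*} [Fintype ι] (x : ι → ℝ) :
    √(x ⬝ᵥ x) = ‖WithLp.toLp 2 x‖ := by
  rw [EuclideanSpace.dotProduct_self_eq_norm_toLp_sq, Real.sqrt_sq (norm_nonneg _)]

theorem pow_mul_two_mul_exp_neg_le {c δ F m : ℝ} {k : ℕ} (hc : 0 < c) (hδ : 0 < δ) (hF : 0 < F)
    (hm : m ≥ (k * Real.log c + Real.log (2 / δ)) / F) :
    c ^ k * (2 * Real.exp (-m * F)) ≤ δ := by
  have hlog : Real.log (c ^ k * (2 / δ)) ≤ m * F := by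
    rw [Real.log_mul (by positivity) (by positivity), Real.log_pow]
    exact (div_le_iff₀ hF).mp hm
  have hexp : c ^ k * (2 / δ) ≤ Real.exp (m * F) := by
    rwa [← Real.exp_le_exp, Real.exp_log (by positivity)] at hlog
  rw [neg_mul, Real.exp_neg, ← mul_assoc, mul_inv_le_iff₀ (Real.exp_pos _)]
  calc c ^ k * 2 = c ^ k * (2 / δ) * δ := by field_simp
    _ ≤ δ * Real.exp (m * F) := by rw [mul_comm δ]; gcongr

section UnionBound

variable {Ω ι : Type*} [MeasurableSpace Ω] (μ : Measure Ω) [IsProbabilityMeasure μ]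

theorem ofReal_one_sub_card_mul_le_measure_biInter (S : Finset ι) (A : ι → Set Ω) {p : ℝ}
    (hp : 0 ≤ p) (hA : ∀ i ∈ S, μ (A i)ᶜ ≤ ENNReal.ofReal p) :
    ENNReal.ofReal (1 - S.card * p) ≤ μ (⋂ i ∈ S, A i) := by
  have hcompl : μ (⋂ i ∈ S, A i)ᶜ ≤ ENNReal.ofReal (S.card * p) :=
    calc μ (⋂ i ∈ S, A i)ᶜ ≤ ∑ i ∈ S, μ (A i)ᶜ := by
          rw [Set.compl_iInter₂]; exact measure_biUnion_finset_le S _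
      _ ≤ ∑ _i ∈ S, ENNReal.ofReal p := Finset.sum_le_sum hA
      _ = ENNReal.ofReal (S.card * p) := by
          rw [Finset.sum_const, nsmul_eq_mul, ENNReal.ofReal_mul (Nat.cast_nonneg _),
            ENNReal.ofReal_natCast]
  rw [ENNReal.ofReal_sub _ (by positivity), ENNReal.ofReal_one, tsub_le_iff_right]
  calc 1 = μ Set.univ := measure_univ.symm
    _ ≤ μ (⋂ i ∈ S, A i) + μ (⋂ i ∈ S, A i)ᶜ := measure_univ_le_add_compl _
    _ ≤ μ (⋂ i ∈ S, A i) + ENNReal.ofReal (S.card * p) := by gcongr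

end UnionBound

theorem div_sqrt_two_le {ε : ℝ} (hε : 0 ≤ ε) : ε / √2 ≤ 5 / 7 * ε := by
  have h : 7 / 5 ≤ √2 := (Real.le_sqrt' (by norm_num)).mpr (by norm_num)
  rw [div_le_iff₀ (by positivity)]
  nlinarith

theorem sqrt_one_add_div_le_of_le_five_sevenths {ε η : ℝ} (hε0 : 0 ≤ ε) (hε1 : ε ≤ 1)
    (hη : η ≤ 5 / 7 * ε) : √(1 + η) / (1 - ε / 14) ≤ √(1 + ε) := by
  rw [div_le_iff₀ (by linarith), ← Real.sqrt_sq (by linarith : 0 ≤ 1 - ε / 14),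
    ← Real.sqrt_mul (by linarith)]
  exact Real.sqrt_le_sqrt (by nlinarith [mul_nonneg hε0 (sub_nonneg.mpr hε1), pow_nonneg hε0 3])

theorem sqrt_one_sub_le_of_le_five_sevenths {ε η : ℝ} (hε1 : ε ≤ 1) (hη0 : 0 ≤ η)
    (hη : η ≤ 5 / 7 * ε) : √(1 - ε) ≤ √(1 - η) - √(1 + η) / (1 - ε / 14) * (ε / 14) := by
  have hε0 : 0 ≤ ε := by linarith
  have hβ := sqrt_one_add_div_le_of_le_five_sevenths hε0 hε1 hη
  have hu := Real.sq_sqrt (by linarith : 0 ≤ 1 - η)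
  have hv := Real.sq_sqrt (by linarith : 0 ≤ 1 - ε)
  have hw := Real.sq_sqrt (by linarith : 0 ≤ 1 + ε)
  set u := √(1 - η)
  set v := √(1 - ε)
  set w := √(1 + ε)
  have hu0 : 0 ≤ u := Real.sqrt_nonneg _
  have hv0 : 0 ≤ v := Real.sqrt_nonneg _
  have hw0 : 0 ≤ w := Real.sqrt_nonneg _
  have huv : v ≤ u := Real.sqrt_le_sqrt (by linarith)
  -- `u - v = (ε - η) / (u + v)` with `ε - η ≥ 2ε/7` and `u + v ≤ 2`
  have hgap : ε / 7 ≤ u - v := by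
    nlinarith [mul_le_mul_of_nonneg_left (by nlinarith : u + v ≤ 2) (sub_nonneg.mpr huv)]
  nlinarith [mul_le_mul_of_nonneg_right hβ (by linarith : 0 ≤ ε / 14)]

theorem sqrt_one_sub_le_and_le_sqrt_one_add {t η : ℝ} (ht : 0 ≤ t) (h : |t ^ 2 - 1| ≤ η) :
    √(1 - η) ≤ t ∧ t ≤ √(1 + η) := by
  rw [abs_le] at h
  rw [← Real.sqrt_sq ht]
  exact ⟨Real.sqrt_le_sqrt (by linarith), Real.sqrt_le_sqrt (by linarith)⟩

section RandomOperator

variable {Ω E F : Type*} [MeasurableSpace Ω] (μ : Measure Ω) [IsProbabilityMeasure μ]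
  [NormedAddCommGroup E] [NormedSpace ℝ E] [FiniteDimensional ℝ E]
  [NormedAddCommGroup F] [NormedSpace ℝ F]

theorem ofReal_one_sub_le_measure_forall_norm_apply_bounds (T : Ω → E →L[ℝ] F) {a η p : ℝ}
    (ha0 : 0 < a) (ha1 : a < 1) (hp : 0 ≤ p)
    (htail : ∀ x : E, ‖x‖ = 1 → μ {ω | η < |‖T ω x‖ ^ 2 - 1|} ≤ ENNReal.ofReal p) :
    ENNReal.ofReal (1 - (3 / a) ^ finrank ℝ E * p) ≤
      μ {ω | ∀ x, (√(1 - η) - √(1 + η) / (1 - a) * a) * ‖x‖ ≤ ‖T ω x‖ ∧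
        ‖T ω x‖ ≤ √(1 + η) / (1 - a) * ‖x‖} := by
  obtain ⟨S, hcard, hunit, hnet⟩ := exists_finset_sphere_net (E := E) ha0 ha1.le
  calc ENNReal.ofReal (1 - (3 / a) ^ finrank ℝ E * p) ≤ ENNReal.ofReal (1 - S.card * p) :=
        ENNReal.ofReal_le_ofReal (by gcongr)
    _ ≤ μ (⋂ q ∈ S, {ω | |‖T ω q‖ ^ 2 - 1| ≤ η}) :=
        ofReal_one_sub_card_mul_le_measure_biInter μ S _ hp fun q hq ↦ by
          simpa only [Set.compl_ofPred, not_le] using htail q (hunit q hq)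
    _ ≤ _ := by
        refine measure_mono fun ω hω ↦ ?_
        simp only [Set.mem_iInter, Set.mem_ofPred_eq] at hω ⊢
        have hS : ∀ q ∈ (S : Set E), √(1 - η) ≤ ‖T ω q‖ ∧ ‖T ω q‖ ≤ √(1 + η) :=
          fun q hq ↦ sqrt_one_sub_le_and_le_sqrt_one_add (norm_nonneg _) (hω q hq)
        exact fun x ↦ ⟨(T ω).mul_norm_le_norm_apply_of_sphere_net ha0.le ha1
          (Real.sqrt_nonneg _) hnet hS x, (T ω).le_of_opNorm_le ((T ω).opNorm_le_of_sphere_net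
          ha0.le ha1 (Real.sqrt_nonneg _) hnet fun q hq ↦ (hS q hq).2) x⟩

end RandomOperator

theorem jl_subspace_embedding_general {m N k : ℕ}
    {Ω : Type*} [MeasurableSpace Ω] (μ : Measure Ω) [IsProbabilityMeasure μ]
    (Φ : Ω → Matrix (Fin m) (Fin N) ℝ)
    (f : ℝ → ℝ) (hf : ∀ e : ℝ, 0 < e → e < 1 → 0 < f e)
    (hJL : ∀ x : Fin N → ℝ, ∀ e : ℝ, 0 < e → e < 1 →
      μ {ω | |((Φ ω).mulVec x ⬝ᵥ (Φ ω).mulVec x) - x ⬝ᵥ x| > e * (x ⬝ᵥ x)} ≤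
        ENNReal.ofReal (2 * Real.exp (-(m : ℝ) * f e)))
    (𝒳 : Submodule ℝ (Fin N → ℝ)) (h𝒳 : Module.finrank ℝ 𝒳 = k)
    (ε δ : ℝ) (hε0 : 0 < ε) (hε1 : ε < 1) (hδ0 : 0 < δ)
    (hm : (m : ℝ) ≥ ((k : ℝ) * Real.log (42 / ε) + Real.log (2 / δ)) /
      f (ε / Real.sqrt 2)) :
    ENNReal.ofReal (1 - δ) ≤
      μ {ω | ∀ x ∈ 𝒳,
        Real.sqrt (1 - ε) * Real.sqrt (x ⬝ᵥ x) ≤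
            Real.sqrt ((Φ ω).mulVec x ⬝ᵥ (Φ ω).mulVec x) ∧
          Real.sqrt ((Φ ω).mulVec x ⬝ᵥ (Φ ω).mulVec x) ≤
            Real.sqrt (1 + ε) * Real.sqrt (x ⬝ᵥ x)} := by
  set η := ε / √2
  have hη : η ≤ 5 / 7 * ε := div_sqrt_two_le hε0.le
  have hη0 : 0 < η := by positivity
  have hη1 : η < 1 := by linarith
  -- `Fin N → ℝ` carries the sup norm, so `𝒳` is moved to `EuclideanSpace`
  let E : Submodule ℝ (EuclideanSpace ℝ (Fin N)) :=
    𝒳.map (WithLp.linearEquiv 2 ℝ (Fin N → ℝ)).symm.toLinearMap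
  have hE : finrank ℝ E = k := (LinearEquiv.finrank_map_eq _ _).trans h𝒳
  let T (ω : Ω) : E →L[ℝ] EuclideanSpace ℝ (Fin m) :=
    (Matrix.toEuclideanLin (Φ ω)).toContinuousLinearMap ∘L E.subtypeL
  have htail (x : E) (hx : ‖x‖ = 1) :
      μ {ω | η < |‖T ω x‖ ^ 2 - 1|} ≤ ENNReal.ofReal (2 * Real.exp (-m * f η)) := by
    have hx2 : WithLp.ofLp x.1 ⬝ᵥ WithLp.ofLp x.1 = 1 := by
      rw [EuclideanSpace.dotProduct_self_eq_norm_toLp_sq, WithLp.toLp_ofLp, ← Submodule.coe_norm,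
        hx, one_pow]
    have h := hJL (WithLp.ofLp x.1) η hη0 hη1
    simp only [hx2, EuclideanSpace.dotProduct_self_eq_norm_toLp_sq, mul_one, gt_iff_lt] at h
    exact h
  have hprob := ofReal_one_sub_le_measure_forall_norm_apply_bounds μ T (a := ε / 14)
    (by positivity) (by linarith) (by positivity) htail
  rw [hE, show 3 / (ε / 14) = 42 / ε by field_simp; norm_num] at hprob
  refine (ENNReal.ofReal_le_ofReal ?_).trans (hprob.trans (measure_mono fun ω hω x hx ↦ ?_))
  · linarith [pow_mul_two_mul_exp_neg_le (by positivity) hδ0 (hf η hη0 hη1) hm]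
  obtain ⟨hlower, hupper⟩ := hω ⟨WithLp.toLp 2 x, Submodule.mem_map_of_mem hx⟩
  have hβ := sqrt_one_add_div_le_of_le_five_sevenths hε0.le hε1.le hη
  have hα := sqrt_one_sub_le_of_le_five_sevenths hε1.le hη0.le hη
  simp only [EuclideanSpace.sqrt_dotProduct_self]
  exact ⟨(mul_le_mul_of_nonneg_right hα (norm_nonneg _)).trans hlower,
    hupper.trans (mul_le_mul_of_nonneg_right hβ (norm_nonneg _))⟩

/-- Subspace JL embedding lemma (Baraniuk et al. / Davenport et al.): if the random matrix `Φ`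
satisfies the distributional JL property with exponent function `f`, and
`m ≥ (k log(42/ε) + log(2/δ)) / f(ε/√2)`, then with probability at least `1 − δ`, `Φ` is a
`√(1±ε)`-isometry on a fixed `k`-dimensional subspace `𝒳 ⊆ ℝᴺ`. -/
theorem jl_subspace_embedding {m N k : ℕ}
    {Ω : Type*} [MeasurableSpace Ω] (μ : Measure Ω) [IsProbabilityMeasure μ]
    (Φ : Ω → Matrix (Fin m) (Fin N) ℝ)
    (f : ℝ → ℝ) (hf : ∀ e : ℝ, 0 < e → e < 1 → 0 < f e)
    (hJL : ∀ x : Fin N → ℝ, ∀ e : ℝ, 0 < e → e < 1 →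
      μ {ω | |((Φ ω).mulVec x ⬝ᵥ (Φ ω).mulVec x) - x ⬝ᵥ x| > e * (x ⬝ᵥ x)} ≤
        ENNReal.ofReal (2 * Real.exp (-(m : ℝ) * f e)))
    (𝒳 : Submodule ℝ (Fin N → ℝ)) (h𝒳 : Module.finrank ℝ 𝒳 = k)
    (ε δ : ℝ) (hε0 : 0 < ε) (hε1 : ε < 1) (hδ0 : 0 < δ) (hδ1 : δ < 1)
    (hm : (m : ℝ) ≥ ((k : ℝ) * Real.log (42 / ε) + Real.log (2 / δ)) /
      f (ε / Real.sqrt 2)) :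
    ENNReal.ofReal (1 - δ) ≤
      μ {ω | ∀ x ∈ 𝒳,
        Real.sqrt (1 - ε) * Real.sqrt (x ⬝ᵥ x) ≤
            Real.sqrt ((Φ ω).mulVec x ⬝ᵥ (Φ ω).mulVec x) ∧
          Real.sqrt ((Φ ω).mulVec x ⬝ᵥ (Φ ω).mulVec x) ≤
            Real.sqrt (1 + ε) * Real.sqrt (x ⬝ᵥ x)} :=
  jl_subspace_embedding_general μ Φ f hf hJL 𝒳 h𝒳 ε δ hε0 hε1 hδ0 hm
end
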